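/- arXiv:2112.00349 — 2 statements merged into one kernel-verified Lean document; each statement's English description precedes it below -/
import Mathlib

section
/- Let X ⊆ L₀(T) be an F-admissible F-space with 0 < μ(T) < ∞, and let Z ⊆ X be a compact set (for the metric induced by the F-norm) with sup{‖f(t)‖ : f ∈ Z, t ∈ T} ≤ M for some M > 0. Then for every ε > 0 there exists a finite measurable partition K of T such that sup{|P_K(f) − f|_F : f ∈ Z} < ε, where P_K is the averaging projection onto K-measurable simple functions. -/
open MeasureTheory Filter Topology

/-- An *F-admissible F-space* `X ⊆ L₀(T)` of `W`-valued measurable functions on a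
σ-finite measure space `(T, Σ, μ)` (Definition 3.2 of the paper):
a complete F-space containing all simple functions with support of finite measure,
whose F-norm is monotone under pointwise norm domination, and satisfying
conditions (d), (e), (f) of the definition. -/
structure FAdmissibleSpace {T : Type*} [MeasurableSpace T] (μ : Measure T)
    (W : Type*) [NormedAddCommGroup W] [NormedSpace ℝ W] where
  /-- The carrier `X ⊆ L₀(T)`. -/
  carrier : Set (T → W)
  /-- The F-norm `|·|_F`. -/
  Fn : (T → W) → ℝ
  zero_mem : 0 ∈ carrier
  add_mem : ∀ f g, f ∈ carrier → g ∈ carrier → f + g ∈ carrier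
  smul_mem : ∀ (c : ℝ) f, f ∈ carrier → c • f ∈ carrier
  /-- Members of `X` are (a.e. strongly) measurable, i.e. `X ⊆ L₀(T)`. -/
  measurable_mem : ∀ f ∈ carrier, AEStronglyMeasurable f μ
  Fn_nonneg : ∀ f, 0 ≤ Fn f
  /-- F-norm axiom (i) (on `L₀`, i.e. up to a.e. equality). -/
  Fn_eq_zero : ∀ f ∈ carrier, (Fn f = 0 ↔ f =ᵐ[μ] 0)
  /-- F-norm axiom (ii). -/
  Fn_neg : ∀ f, Fn (-f) = Fn f
  /-- F-norm axiom (iii): triangle inequality. -/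
  Fn_add : ∀ f g, Fn (f + g) ≤ Fn f + Fn g
  /-- F-norm axiom (iv): joint continuity of scalar multiplication. -/
  Fn_smul : ∀ (f : T → W) (fs : ℕ → T → W) (c : ℝ) (cs : ℕ → ℝ),
      Tendsto (fun n => Fn (fs n - f)) atTop (𝓝 0) → Tendsto cs atTop (𝓝 c) →
      Tendsto (fun n => Fn (cs n • fs n - c • f)) atTop (𝓝 0)
  /-- (b): simple functions with support of finite measure belong to `X`. -/
  simple_mem : ∀ s : SimpleFunc T W, μ (Function.support s) < ⊤ → ⇑s ∈ carrier
  /-- (c): monotonicity of the F-norm under pointwise norm domination. -/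
  mono : ∀ (f g : T → W), AEStronglyMeasurable f μ → g ∈ carrier →
      (∀ᵐ t ∂μ, ‖f t‖ ≤ ‖g t‖) → f ∈ carrier ∧ Fn f ≤ Fn g
  /-- (d): `‖wₙ‖ → 0` implies `|wₙ χ_A|_F → 0` for `μ A < ∞`. -/
  tendsto_const_indicator : ∀ (w : ℕ → W) (A : Set T), MeasurableSet A → μ A < ⊤ →
      Tendsto (fun n => ‖w n‖) atTop (𝓝 0) →
      Tendsto (fun n => Fn (A.indicator fun _ => w n)) atTop (𝓝 0)
  /-- (e): `|w χ_{Aₙ}|_F → 0` iff `μ Aₙ → 0`, for `w ≠ 0`. -/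
  indicator_tendsto_iff : ∀ (A : ℕ → Set T), (∀ n, MeasurableSet (A n)) → ∀ w : W, w ≠ 0 →
      (Tendsto (fun n => Fn ((A n).indicator fun _ => w)) atTop (𝓝 0) ↔
        Tendsto (fun n => μ (A n)) atTop (𝓝 0))
  /-- (f): dominated a.e. convergence implies F-norm convergence. -/
  dominated : ∀ (f : T → W) (fs : ℕ → T → W), f ∈ carrier → (∀ n, fs n ∈ carrier) →
      (∀ᵐ t ∂μ, Tendsto (fun n => fs n t) atTop (𝓝 (f t))) →
      (∀ n t, ‖fs n t‖ ≤ ‖f t‖) →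
      Tendsto (fun n => Fn (fs n - f)) atTop (𝓝 0)
  /-- Completeness: `X` is a Fréchet space for the metric induced by the F-norm. -/
  complete : ∀ fs : ℕ → T → W, (∀ n, fs n ∈ carrier) →
      (∀ ε : ℝ, 0 < ε → ∃ N, ∀ p q, N ≤ p → N ≤ q → Fn (fs p - fs q) < ε) →
      ∃ f ∈ carrier, Tendsto (fun n => Fn (fs n - f)) atTop (𝓝 0)

/-- A set `Z ⊆ X` is compact for the metric induced by the F-norm
(stated sequentially, which is equivalent in metric spaces). -/
def FAdmissibleSpace.IsCompactSet {T : Type*} [MeasurableSpace T] {μ : Measure T}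
    {W : Type*} [NormedAddCommGroup W] [NormedSpace ℝ W]
    (X : FAdmissibleSpace μ W) (Z : Set (T → W)) : Prop :=
  ∀ g : ℕ → T → W, (∀ n, g n ∈ Z) →
    ∃ f ∈ Z, ∃ φ : ℕ → ℕ, StrictMono φ ∧
      Tendsto (fun k => X.Fn (g (φ k) - f)) atTop (𝓝 0)

/-!
Cover `Z` by finitely many `|·|_F`-balls of small radius and approximate each centre `g`, in
measure, by a simple function bounded by `M`. Let `K` be the partition into the non-null level sets
of these finitely many simple functions, so that `P_K s = s` a.e. for each of them. If `f ∈ Z` is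
close to `g` with simple approximant `s`, then `P_K f - f = P_K (f - s) + (s - f)` a.e.
Axiom (e) converts `|f - g|_F` small into `μ {‖f - g‖ ≥ η}` small, so `f - s` is small off a small
set. Averaging preserves this up to a constant (on a cell where `‖P_K h‖ ≥ 2 θ`, the set
`{‖h‖ ≥ θ}` occupies a proportion at least `θ / 2M`), and by (d) and (e) a function bounded by
`2M` that is small off a small set has small F-norm.
-/

open scoped ENNReal

section Measure

variable {T : Type*} [MeasurableSpace T] {μ : Measure T}
  {W : Type*} [NormedAddCommGroup W] [NormedSpace ℝ W]

lemma measure_add_le_norm_sub_le {E : Type*} [SeminormedAddCommGroup E] (u v w : T → E) (a b : ℝ) :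
    μ {t | a + b ≤ ‖u t - w t‖} ≤ μ {t | a ≤ ‖u t - v t‖} + μ {t | b ≤ ‖w t - v t‖} := by
  refine (measure_mono fun t (ht : a + b ≤ ‖u t - w t‖) => ?_).trans (measure_union_le _ _)
  by_contra! h
  simp only [Set.mem_union, Set.mem_ofPred_eq, not_or, not_le] at h
  have := norm_sub_le_norm_sub_add_norm_sub (u t) (v t) (w t)
  rw [norm_sub_rev (v t)] at this
  linarith

lemma exists_bounded_simpleFunc_close_in_measure [IsFiniteMeasure μ] {g : T → W}
    (hg : AEStronglyMeasurable g μ) {M : ℝ} (hM : 0 ≤ M) (hgM : ∀ᵐ t ∂μ, ‖g t‖ ≤ M) {η : ℝ}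
    (hη : 0 < η) {δ : ℝ≥0∞} (hδ : 0 < δ) :
    ∃ s : SimpleFunc T W, (∀ t, ‖s t‖ ≤ M) ∧ μ {t | η ≤ ‖s t - g t‖} < δ := by
  have hlim : ∀ᵐ t ∂μ, Tendsto (fun n => hg.stronglyMeasurable_mk.approxBounded M n t) atTop
      (𝓝 (g t)) := by
    filter_upwards [hg.ae_eq_mk, hg.stronglyMeasurable_mk.tendsto_approxBounded_ae
      (by filter_upwards [hg.ae_eq_mk, hgM] with t ht ht' using ht ▸ ht')] with t ht ht'
    rwa [ht]
  have hmeas := tendstoInMeasure_iff_norm.1 (tendstoInMeasure_of_tendsto_ae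
    (fun n => (SimpleFunc.stronglyMeasurable _).aestronglyMeasurable) hlim) η hη
  obtain ⟨n, hn⟩ := (hmeas.eventually (gt_mem_nhds hδ)).exists
  exact ⟨_, hg.stronglyMeasurable_mk.norm_approxBounded_le hM n, hn⟩

end Measure

namespace FAdmissibleSpace

variable {T : Type*} [MeasurableSpace T] {μ : Measure T}
  {W : Type*} [NormedAddCommGroup W] [NormedSpace ℝ W] (X : FAdmissibleSpace μ W)

lemma Fn_zero : X.Fn 0 = 0 :=
  (X.Fn_eq_zero 0 X.zero_mem).2 (by rfl)

lemma Fn_sub_comm (f g : T → W) : X.Fn (f - g) = X.Fn (g - f) := by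
  rw [← X.Fn_neg, neg_sub]

lemma Fn_eq_zero_of_ae_eq_zero {h : T → W} (hm : AEStronglyMeasurable h μ) (h0 : h =ᵐ[μ] 0) :
    X.Fn h = 0 :=
  le_antisymm
    (X.Fn_zero ▸ (X.mono h 0 hm X.zero_mem (by filter_upwards [h0] with t ht; simp [ht])).2)
    (X.Fn_nonneg h)

lemma sub_mem {f g : T → W} (hf : f ∈ X.carrier) (hg : g ∈ X.carrier) : f - g ∈ X.carrier := by
  simpa [sub_eq_add_neg] using X.add_mem f _ hf (X.smul_mem (-1) g hg)

lemma indicator_const_mem {A : Set T} (hA : MeasurableSet A) (hμA : μ A ≠ ⊤) (w : W) :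
    A.indicator (fun _ => w) ∈ X.carrier := by
  have hsupp : Function.support ((SimpleFunc.const T w).restrict A) ⊆ A := by
    rw [SimpleFunc.coe_restrict _ hA]
    exact Set.support_indicator_subset
  have := X.simple_mem _ ((measure_mono hsupp).trans_lt hμA.lt_top)
  rwa [SimpleFunc.coe_restrict _ hA, SimpleFunc.coe_const] at this

lemma exists_Fn_indicator_const_lt {w : W} (hw : w ≠ 0) {ε : ℝ} (hε : 0 < ε) :
    ∃ δ > (0 : ℝ≥0∞), ∀ A, MeasurableSet A → μ A ≤ δ → X.Fn (A.indicator fun _ => w) < ε := by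
  by_contra! hcon
  choose A hA hμA hFn using fun n : ℕ => hcon (n : ℝ≥0∞)⁻¹ (by simp)
  have hμ : Tendsto (fun n => μ (A n)) atTop (𝓝 0) :=
    tendsto_of_tendsto_of_tendsto_of_le_of_le tendsto_const_nhds
      ENNReal.tendsto_inv_nat_nhds_zero (fun _ => zero_le) hμA
  obtain ⟨n, hn⟩ := (((X.indicator_tendsto_iff A hA w hw).2 hμ).eventually
    (gt_mem_nhds hε)).exists
  exact (hFn n).not_gt hn

lemma exists_measure_lt_of_Fn_indicator_const_lt {w : W} (hw : w ≠ 0) {δ : ℝ≥0∞}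
    (hδ : 0 < δ) :
    ∃ ρ > (0 : ℝ), ∀ A, MeasurableSet A → X.Fn (A.indicator fun _ => w) < ρ → μ A < δ := by
  by_contra! hcon
  choose A hA hFn hμA using fun n : ℕ => hcon (1 / ((n : ℝ) + 1)) (by positivity)
  have hFn0 : Tendsto (fun n => X.Fn ((A n).indicator fun _ => w)) atTop (𝓝 0) :=
    tendsto_of_tendsto_of_tendsto_of_le_of_le tendsto_const_nhds
      tendsto_one_div_add_atTop_nhds_zero_nat (fun _ => X.Fn_nonneg _) fun n => (hFn n).le
  obtain ⟨n, hn⟩ := (((X.indicator_tendsto_iff A hA w hw).1 hFn0).eventually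
    (gt_mem_nhds hδ)).exists
  exact (hμA n).not_gt hn

lemma exists_Fn_lt_of_norm_le_of_measure_le (hT : μ Set.univ ≠ ⊤) {ε : ℝ} (hε : 0 < ε)
    {C : ℝ} (hC : 0 < C) :
    ∃ η > (0 : ℝ), ∃ δ > (0 : ℝ≥0∞), ∀ h : T → W, AEStronglyMeasurable h μ →
      (∀ᵐ t ∂μ, ‖h t‖ ≤ C) → μ {t | η ≤ ‖h t‖} ≤ δ → X.Fn h < ε := by
  rcases subsingleton_or_nontrivial W with hW | hW
  · refine ⟨1, one_pos, 1, one_pos, fun h _ _ _ => ?_⟩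
    rwa [Subsingleton.elim h 0, X.Fn_zero]
  obtain ⟨w₁, hw₁⟩ := exists_norm_eq W zero_le_one
  obtain ⟨wC, hwC⟩ := exists_norm_eq W hC.le
  have habs (n : ℕ) : |(n : ℝ) + 1| = n + 1 := abs_of_pos (by positivity)
  have hlim := X.tendsto_const_indicator (fun n => (1 / ((n : ℝ) + 1)) • w₁) Set.univ
    MeasurableSet.univ hT.lt_top (by
      simpa [norm_smul, hw₁, habs] using tendsto_one_div_add_atTop_nhds_zero_nat (𝕜 := ℝ))
  obtain ⟨n, hn⟩ := (hlim.eventually (gt_mem_nhds (half_pos hε))).exists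
  set η : ℝ := 1 / ((n : ℝ) + 1)
  obtain ⟨δ, hδ, hA⟩ := X.exists_Fn_indicator_const_lt (norm_pos_iff.1 (hwC ▸ hC)) (half_pos hε)
  refine ⟨η, by positivity, δ, hδ, fun h hm hhC hμ => ?_⟩
  set A := toMeasurable μ {t | η ≤ ‖h t‖}
  have hAm : MeasurableSet A := measurableSet_toMeasurable _ _
  have hμA : μ A ≠ ⊤ := ne_top_of_le_ne_top hT (measure_mono (Set.subset_univ _))
  have hbig : X.Fn (A.indicator h) < ε / 2 := by
    refine lt_of_le_of_lt (X.mono _ _ (hm.indicator hAm) (X.indicator_const_mem hAm hμA wC) ?_).2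
      (hA A hAm (by rwa [measure_toMeasurable]))
    filter_upwards [hhC] with t ht
    by_cases htA : t ∈ A <;> simp [htA, hwC, ht]
  have hsmall : X.Fn (Aᶜ.indicator h) < ε / 2 := by
    refine lt_of_le_of_lt (X.mono _ _ (hm.indicator hAm.compl)
      (X.indicator_const_mem MeasurableSet.univ hT _) (Eventually.of_forall fun t => ?_)).2 hn
    by_cases htA : t ∈ A
    · simp [htA]
    · have : ‖h t‖ < η := not_le.1 fun ht => htA (subset_toMeasurable _ _ ht)
      simpa [htA, norm_smul, hw₁, η, habs] using this.le
  calc X.Fn h = X.Fn (A.indicator h + Aᶜ.indicator h) := by rw [Set.indicator_self_add_compl]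
    _ ≤ X.Fn (A.indicator h) + X.Fn (Aᶜ.indicator h) := X.Fn_add _ _
    _ < ε := by linarith

lemma exists_measure_norm_ge_lt_of_Fn_lt {η : ℝ} (hη : 0 < η) {δ : ℝ≥0∞} (hδ : 0 < δ) :
    ∃ ρ > (0 : ℝ), ∀ h ∈ X.carrier, X.Fn h < ρ → μ {t | η ≤ ‖h t‖} < δ := by
  rcases subsingleton_or_nontrivial W with hW | hW
  · refine ⟨1, one_pos, fun h _ _ => ?_⟩
    simpa [Subsingleton.elim _ (0 : W), not_le.2 hη] using hδ
  obtain ⟨w, hw⟩ := exists_norm_eq W hη.le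
  obtain ⟨ρ, hρ, hA⟩ := X.exists_measure_lt_of_Fn_indicator_const_lt (norm_pos_iff.1 (hw ▸ hη)) hδ
  refine ⟨ρ, hρ, fun h hX hFn => ?_⟩
  obtain ⟨A, hAsub, hAm, hAeq⟩ :=
    (aestronglyMeasurable_const.nullMeasurableSet_le
      (X.measurable_mem h hX).norm).exists_measurable_subset_ae_eq
  rw [← measure_congr hAeq]
  refine hA A hAm (lt_of_le_of_lt (X.mono _ _ (aestronglyMeasurable_const.indicator hAm) hX
    (Eventually.of_forall fun t => ?_)).2 hFn)
  by_cases htA : t ∈ A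
  · simpa [htA, hw] using hAsub htA
  · simp [htA]

/-- `T → W` with the pseudometric `(f, g) ↦ |f - g|_F` instead of the product topology. -/
def Metrized (_X : FAdmissibleSpace μ W) : Type _ := T → W

noncomputable instance : PseudoMetricSpace X.Metrized where
  dist (f g : T → W) := X.Fn (f - g)
  dist_self (f : T → W) := by simp [X.Fn_zero]
  dist_comm := X.Fn_sub_comm
  dist_triangle (f g h : T → W) := by simpa using X.Fn_add (f - g) (g - h)

variable {X}

lemma IsCompactSet.exists_finite_net {Z : Set (T → W)} (hZ : X.IsCompactSet Z) {ρ : ℝ}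
    (hρ : 0 < ρ) : ∃ N ⊆ Z, N.Finite ∧ ∀ f ∈ Z, ∃ g ∈ N, X.Fn (f - g) < ρ := by
  have hseq : IsSeqCompact (show Set X.Metrized from Z) := fun u hu => by
    obtain ⟨f, hf, φ, hφ, h⟩ := hZ u hu
    exact ⟨f, hf, φ, hφ, tendsto_iff_dist_tendsto_zero.2 h⟩
  obtain ⟨N, hNZ, hN, hcover⟩ := Metric.finite_approx_of_totallyBounded hseq.totallyBounded ρ hρ
  refine ⟨N, hNZ, hN, fun f hf => ?_⟩
  obtain ⟨g, hg, hfg⟩ := Set.mem_iUnion₂.1 (hcover hf)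
  exact ⟨g, hg, hfg⟩

lemma IsCompactSet.exists_finite_simpleFunc_approx [IsFiniteMeasure μ] {Z : Set (T → W)}
    (hZ : X.IsCompactSet Z) (hZX : Z ⊆ X.carrier) {M : ℝ} (hM : 0 ≤ M)
    (hZM : ∀ f ∈ Z, ∀ t, ‖f t‖ ≤ M) {θ : ℝ} (hθ : 0 < θ) {δ : ℝ≥0∞} (hδ : 0 < δ) :
    ∃ S : Set (SimpleFunc T W), S.Finite ∧ (∀ s ∈ S, ∀ t, ‖s t‖ ≤ M) ∧
      ∀ f ∈ Z, ∃ s ∈ S, μ {t | θ ≤ ‖f t - s t‖} ≤ δ := by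
  obtain ⟨ρ, hρ, hD⟩ := X.exists_measure_norm_ge_lt_of_Fn_lt (half_pos hθ)
    (ENNReal.half_pos hδ.ne')
  obtain ⟨N, hNZ, hN, hnet⟩ := hZ.exists_finite_net hρ
  have := hN.to_subtype
  choose s hsM hsg using fun g : N => exists_bounded_simpleFunc_close_in_measure
    (X.measurable_mem g (hZX (hNZ g.2))) hM (ae_of_all _ (hZM g (hNZ g.2))) (half_pos hθ)
    (ENNReal.half_pos hδ.ne')
  refine ⟨Set.range s, Set.finite_range s, Set.forall_mem_range.2 hsM, fun f hf => ?_⟩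
  obtain ⟨g, hgN, hfg⟩ := hnet f hf
  refine ⟨s ⟨g, hgN⟩, Set.mem_range_self _, ?_⟩
  calc μ {t | θ ≤ ‖f t - s ⟨g, hgN⟩ t‖}
      ≤ μ {t | θ / 2 ≤ ‖f t - g t‖} + μ {t | θ / 2 ≤ ‖s ⟨g, hgN⟩ t - g t‖} := by
        simpa using measure_add_le_norm_sub_le f g (s ⟨g, hgN⟩) (θ / 2) (θ / 2) (μ := μ)
    _ ≤ δ / 2 + δ / 2 :=
        add_le_add (hD _ (X.sub_mem (hZX hf) (hZX (hNZ hgN))) hfg).le (hsg _).le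
    _ = δ := ENNReal.add_halves δ

end FAdmissibleSpace

section Partition

variable {T : Type*} [MeasurableSpace T] {μ : Measure T} {k : ℕ}

structure IsPosMeasurePartition (μ : Measure T) (K : Fin k → Set T) : Prop where
  measurableSet : ∀ i, MeasurableSet (K i)
  pairwise_disjoint : Pairwise (Function.onFun Disjoint K)
  iUnion_eq_univ : (⋃ i, K i) = Set.univ
  measure_pos : ∀ i, 0 < μ (K i)

lemma IsPosMeasurePartition.exists_mem {K : Fin k → Set T} (hK : IsPosMeasurePartition μ K)
    (t : T) : ∃ i, t ∈ K i :=
  Set.mem_iUnion.1 (hK.iUnion_eq_univ ▸ Set.mem_univ t)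

lemma exists_isPosMeasurePartition_of_fibers {β : Type*} (V : Finset β) {S : T → β}
    (hSV : ∀ t, S t ∈ V) (hS : ∀ b, MeasurableSet (S ⁻¹' {b})) (hpos : ∀ b ∈ V, μ (S ⁻¹' {b}) ≠ 0) :
    ∃ (k : ℕ) (K : Fin k → Set T), IsPosMeasurePartition μ K ∧ ∀ i, ∃ b, ∀ t ∈ K i, S t = b := by
  let e : Fin V.card → V := V.equivFin.symm
  refine ⟨V.card, fun i => S ⁻¹' {(e i : β)}, ⟨fun i => hS _, fun i j hij => ?_, ?_,
    fun i => pos_iff_ne_zero.2 (hpos _ (e i).2)⟩, fun i => ⟨e i, fun t ht => ht⟩⟩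
  · refine Disjoint.preimage S (Set.disjoint_singleton.2 fun h => hij ?_)
    exact V.equivFin.symm.injective (Subtype.ext h)
  · refine Set.eq_univ_of_forall fun t => Set.mem_iUnion.2 ⟨V.equivFin ⟨S t, hSV t⟩, ?_⟩
    simp [e]

lemma exists_isPosMeasurePartition_of_finite_range (hT : μ Set.univ ≠ 0) {β : Type*}
    {S : T → β} (hfin : (Set.range S).Finite) (hS : ∀ b, MeasurableSet (S ⁻¹' {b})) :
    ∃ (k : ℕ) (K : Fin k → Set T), IsPosMeasurePartition μ K ∧
      ∀ i, ∃ b, ∀ᵐ t ∂μ, t ∈ K i → S t = b := by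
  classical
  let V := hfin.toFinset.filter fun b => μ (S ⁻¹' {b}) ≠ 0
  have hnull : ∀ᵐ t ∂μ, S t ∈ V := by
    refine measure_mono_null (t := ⋃ b ∈ (Set.range S \ V), S ⁻¹' {b}) ?_ ?_
    · intro t ht
      exact Set.mem_biUnion (⟨Set.mem_range_self t, ht⟩) rfl
    · refine (measure_biUnion_null_iff (hfin.subset Set.sdiff_subset).countable).2 ?_
      rintro b ⟨hb, hbV⟩
      by_contra h
      exact hbV (Finset.mem_filter.2 ⟨hfin.mem_toFinset.2 hb, h⟩)
  obtain ⟨b₀, hb₀⟩ : V.Nonempty := by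
    by_contra! hV
    simp [hV] at hnull
    simp [hnull] at hT
  have hVm : MeasurableSet {t | S t ∈ V} := by
    have : {t | S t ∈ V} = ⋃ b ∈ V, S ⁻¹' {b} := by ext; simp
    exact this ▸ V.measurableSet_biUnion fun b _ => hS b
  -- values taken only on a null set are redirected to `b₀`
  let S' : T → β := Set.piecewise {t | S t ∈ V} S fun _ => b₀
  obtain ⟨k, K, hK, hconst⟩ := exists_isPosMeasurePartition_of_fibers V (S := S')
    (fun t => by by_cases h : S t ∈ V <;> simp [S', h, hb₀])
    (fun b => by rw [Set.piecewise_preimage]; exact hVm.ite (hS b) (.const (b₀ = b)))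
    (fun b hb => by
      refine ne_bot_of_le_ne_bot (Finset.mem_filter.1 hb).2 (measure_mono fun t ht => ?_)
      simp_all [S'])
  refine ⟨k, K, hK, fun i => ?_⟩
  obtain ⟨b, hb⟩ := hconst i
  refine ⟨b, ?_⟩
  filter_upwards [hnull] with t ht htK
  simpa [S', ht] using hb t htK

lemma exists_isPosMeasurePartition_ae_const (hT : μ Set.univ ≠ 0) {W : Type*}
    {S : Set (SimpleFunc T W)} (hS : S.Finite) :
    ∃ (k : ℕ) (K : Fin k → Set T), IsPosMeasurePartition μ K ∧
      ∀ s ∈ S, ∀ i, ∃ c, ∀ᵐ t ∂μ, t ∈ K i → s t = c := by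
  have := hS.to_subtype
  have hfin : (Set.range fun t (s : S) => s.1 t).Finite :=
    (Set.Finite.pi fun s : S => s.1.finite_range).subset (by rintro _ ⟨t, rfl⟩; simp)
  have hfiber (v : S → W) : MeasurableSet ((fun t (s : S) => s.1 t) ⁻¹' {v}) := by
    have : (fun t (s : S) => s.1 t) ⁻¹' {v} = ⋂ s : S, s.1 ⁻¹' {v s} := by ext; simp [funext_iff]
    exact this ▸ .iInter fun s => s.1.measurableSet_fiber (v s)
  obtain ⟨k, K, hK, hconst⟩ := exists_isPosMeasurePartition_of_finite_range hT hfin hfiber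
  refine ⟨k, K, hK, fun s hs i => ?_⟩
  obtain ⟨v, hv⟩ := hconst i
  exact ⟨v ⟨s, hs⟩, by filter_upwards [hv] with t ht htK using congrFun (ht htK) ⟨s, hs⟩⟩

end Partition

section PartitionAverage

variable {T : Type*} [MeasurableSpace T] {μ : Measure T}
  {W : Type*} [NormedAddCommGroup W] [NormedSpace ℝ W] {k : ℕ} {K : Fin k → Set T}

/-- The averaging projection `P_K`. -/
noncomputable def partitionAverage (μ : Measure T) (K : Fin k → Set T) (f : T → W) : T → W :=
  fun t => ∑ i, (K i).indicator (fun _ => ⨍ s in K i, f s ∂μ) t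

lemma partitionAverage_eq_sum_indicator (f : T → W) :
    partitionAverage μ K f = fun t => ∑ i, Set.indicator (K i)
      (fun _ => (μ (K i)).toReal⁻¹ • ∫ s in K i, f s ∂μ) t := by
  ext t
  simp only [partitionAverage, setAverage_eq, measureReal_def]

lemma partitionAverage_of_mem (hK : Pairwise (Function.onFun Disjoint K)) (f : T → W) {i : Fin k}
    {t : T} (ht : t ∈ K i) : partitionAverage μ K f t = ⨍ s in K i, f s ∂μ := by
  rw [partitionAverage, Finset.sum_eq_single i (fun j _ hji => ?_) (by simp),
    Set.indicator_of_mem ht]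
  exact Set.indicator_of_notMem (Set.disjoint_left.1 (hK hji).symm ht) _

lemma stronglyMeasurable_partitionAverage (hK : ∀ i, MeasurableSet (K i)) (f : T → W) :
    StronglyMeasurable (partitionAverage μ K f) :=
  Finset.stronglyMeasurable_fun_sum _ fun i _ => stronglyMeasurable_const.indicator (hK i)

lemma partitionAverage_sub {f g : T → W} (hf : Integrable f μ) (hg : Integrable g μ) :
    partitionAverage μ K (f - g) = partitionAverage μ K f - partitionAverage μ K g := by
  funext t
  rw [Pi.sub_apply, partitionAverage, partitionAverage, partitionAverage, ← Finset.sum_sub_distrib]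
  refine Finset.sum_congr rfl fun i _ => ?_
  by_cases ht : t ∈ K i <;>
    simp [ht, setAverage_eq, integral_sub hf.integrableOn hg.integrableOn, smul_sub]

lemma norm_setAverage_le {s : Set T} (hs₀ : μ s ≠ 0) (hs : μ s ≠ ⊤) {f : T → W} {C : ℝ}
    (hf : ∀ᵐ t ∂μ, t ∈ s → ‖f t‖ ≤ C) : ‖⨍ x in s, f x ∂μ‖ ≤ C := by
  have hpos : 0 < μ.real s := ENNReal.toReal_pos hs₀ hs
  rw [setAverage_eq, norm_smul, Real.norm_of_nonneg (inv_nonneg.2 hpos.le), inv_mul_le_iff₀ hpos,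
    mul_comm]
  exact norm_setIntegral_le_of_norm_le_const_ae' hs.lt_top hf

lemma FAdmissibleSpace.Fn_partitionAverage_sub_le (X : FAdmissibleSpace μ W)
    (hK : ∀ i, MeasurableSet (K i)) {f s : T → W} (hf : Integrable f μ) (hs : Integrable s μ)
    (hsK : partitionAverage μ K s =ᵐ[μ] s) :
    X.Fn (partitionAverage μ K f - f) ≤
      X.Fn (partitionAverage μ K (f - s)) + X.Fn (s - f) := by
  have hzero : X.Fn (partitionAverage μ K s - s) = 0 :=
    X.Fn_eq_zero_of_ae_eq_zero
      ((stronglyMeasurable_partitionAverage hK s).aestronglyMeasurable.sub hs.1)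
      (by filter_upwards [hsK] with t ht; simp [ht])
  calc X.Fn (partitionAverage μ K f - f)
      = X.Fn ((partitionAverage μ K (f - s) + (s - f)) + (partitionAverage μ K s - s)) := by
        rw [partitionAverage_sub hf hs]; abel_nf
    _ ≤ X.Fn (partitionAverage μ K (f - s)) + X.Fn (s - f) := by
        linarith [X.Fn_add (partitionAverage μ K (f - s) + (s - f)) (partitionAverage μ K s - s),
          X.Fn_add (partitionAverage μ K (f - s)) (s - f)]

variable [IsFiniteMeasure μ]

lemma norm_partitionAverage_le (hK : IsPosMeasurePartition μ K) {f : T → W} {C : ℝ}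
    (hf : ∀ᵐ t ∂μ, ‖f t‖ ≤ C) (t : T) : ‖partitionAverage μ K f t‖ ≤ C := by
  obtain ⟨i, hi⟩ := hK.exists_mem t
  rw [partitionAverage_of_mem hK.pairwise_disjoint f hi]
  exact norm_setAverage_le (hK.measure_pos i).ne' (measure_ne_top μ _)
    (by filter_upwards [hf] with t ht _ using ht)

lemma partitionAverage_ae_eq_self [CompleteSpace W] (hK : IsPosMeasurePartition μ K) {f : T → W}
    (hf : ∀ i, ∃ c, ∀ᵐ t ∂μ, t ∈ K i → f t = c) : partitionAverage μ K f =ᵐ[μ] f := by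
  choose c hc using hf
  filter_upwards [ae_all_iff.2 hc] with t ht
  obtain ⟨i, hi⟩ := hK.exists_mem t
  rw [partitionAverage_of_mem hK.pairwise_disjoint f hi, ht i hi,
    setAverage_congr_fun (hK.measurableSet i) (hc i),
    setAverage_const (hK.measure_pos i).ne' (measure_ne_top μ _)]

lemma norm_setIntegral_le_of_norm_le_off {s A : Set T} (hA : MeasurableSet A) {f : T → W}
    (hf : IntegrableOn f s μ) {C θ : ℝ} (hθ : 0 ≤ θ) (hC : ∀ᵐ t ∂μ, ‖f t‖ ≤ C)
    (hoff : ∀ t ∉ A, ‖f t‖ ≤ θ) :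
    ‖∫ x in s, f x ∂μ‖ ≤ C * μ.real (s ∩ A) + θ * μ.real s := by
  rw [← integral_inter_add_sdiff hA hf]
  refine (norm_add_le _ _).trans (add_le_add ?_ ?_)
  · exact norm_setIntegral_le_of_norm_le_const_ae' (measure_lt_top μ _)
      (by filter_upwards [hC] with t ht _ using ht)
  · calc ‖∫ x in s \ A, f x ∂μ‖ ≤ θ * μ.real (s \ A) :=
          norm_setIntegral_le_of_norm_le_const_ae' (measure_lt_top μ _)
            (Eventually.of_forall fun t ht => hoff t ht.2)
      _ ≤ θ * μ.real s := by gcongr; exacts [measure_ne_top μ s, Set.sdiff_subset]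

lemma mul_measure_le_of_two_mul_le_norm_setAverage {s A : Set T} (hs₀ : μ s ≠ 0)
    (hA : MeasurableSet A) {f : T → W} (hf : IntegrableOn f s μ) {C θ : ℝ} (hθ : 0 ≤ θ)
    (hC : ∀ᵐ t ∂μ, ‖f t‖ ≤ C) (hoff : ∀ t ∉ A, ‖f t‖ ≤ θ)
    (havg : 2 * θ ≤ ‖⨍ x in s, f x ∂μ‖) :
    ENNReal.ofReal θ * μ s ≤ ENNReal.ofReal C * μ (s ∩ A) := by
  have hpos : 0 < μ.real s := ENNReal.toReal_pos hs₀ (measure_ne_top μ _)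
  have hint := norm_setIntegral_le_of_norm_le_off hA hf hθ hC hoff
  rw [setAverage_eq, norm_smul, Real.norm_of_nonneg (inv_nonneg.2 hpos.le),
    le_inv_mul_iff₀ hpos] at havg
  have : θ * μ.real s ≤ C * μ.real (s ∩ A) := by nlinarith
  rw [← ofReal_measureReal (measure_ne_top μ s), ← ofReal_measureReal (measure_ne_top μ _),
    ← ENNReal.ofReal_mul' measureReal_nonneg, ← ENNReal.ofReal_mul' measureReal_nonneg]
  exact ENNReal.ofReal_le_ofReal this

/-- A Markov-type inequality: on each cell where the average of `f` reaches `2 θ`, `f` reaches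
`θ` on a proportion at least `θ / C` of the cell. -/
lemma mul_meas_ge_partitionAverage_le (hK : IsPosMeasurePartition μ K) {f : T → W}
    (hfm : AEStronglyMeasurable f μ) {C θ : ℝ} (hθ : 0 ≤ θ) (hC : ∀ᵐ t ∂μ, ‖f t‖ ≤ C) :
    ENNReal.ofReal θ * μ {t | 2 * θ ≤ ‖partitionAverage μ K f t‖} ≤
      ENNReal.ofReal C * μ {t | θ ≤ ‖f t‖} := by
  classical
  set A := toMeasurable μ {t | θ ≤ ‖f t‖}
  have hA : MeasurableSet A := measurableSet_toMeasurable _ _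
  have hoff (t) (ht : t ∉ A) : ‖f t‖ ≤ θ := (not_le.1 fun h => ht (subset_toMeasurable _ _ h)).le
  let bad := Finset.univ.filter fun i => 2 * θ ≤ ‖⨍ s in K i, f s ∂μ‖
  have hsub : {t | 2 * θ ≤ ‖partitionAverage μ K f t‖} ⊆ ⋃ i ∈ bad, K i := fun t ht => by
    obtain ⟨i, hi⟩ := hK.exists_mem t
    rw [Set.mem_ofPred_eq, partitionAverage_of_mem hK.pairwise_disjoint f hi] at ht
    exact Set.mem_biUnion (Finset.mem_filter.2 ⟨Finset.mem_univ i, ht⟩) hi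
  have hdisj : Set.PairwiseDisjoint (bad : Set (Fin k)) fun i => K i ∩ A :=
    fun i _ j _ hij => (hK.pairwise_disjoint hij).mono Set.inter_subset_left Set.inter_subset_left
  calc ENNReal.ofReal θ * μ {t | 2 * θ ≤ ‖partitionAverage μ K f t‖}
      ≤ ENNReal.ofReal θ * ∑ i ∈ bad, μ (K i) := by
        gcongr; exact (measure_mono hsub).trans (measure_biUnion_finset_le _ _)
    _ ≤ ∑ i ∈ bad, ENNReal.ofReal C * μ (K i ∩ A) := by
        rw [Finset.mul_sum]
        exact Finset.sum_le_sum fun i hi => mul_measure_le_of_two_mul_le_norm_setAverage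
          (hK.measure_pos i).ne' hA (Integrable.of_bound hfm C hC).integrableOn hθ hC hoff
          (Finset.mem_filter.1 hi).2
    _ = ENNReal.ofReal C * μ (⋃ i ∈ bad, K i ∩ A) := by
        rw [← Finset.mul_sum, measure_biUnion_finset hdisj fun i _ => (hK.measurableSet i).inter hA]
    _ ≤ ENNReal.ofReal C * μ {t | θ ≤ ‖f t‖} := by
        rw [← measure_toMeasurable {t | θ ≤ ‖f t‖}]
        gcongr
        exact Set.iUnion₂_subset fun i _ => Set.inter_subset_right

lemma measure_norm_partitionAverage_ge_le (hK : IsPosMeasurePartition μ K) {f : T → W}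
    (hfm : AEStronglyMeasurable f μ) {C η : ℝ} (hC₀ : 0 < C) (hη : 0 < η)
    (hC : ∀ᵐ t ∂μ, ‖f t‖ ≤ C) {δ : ℝ≥0∞}
    (hf : μ {t | η / 2 ≤ ‖f t‖} ≤ ENNReal.ofReal (η / 2 / C) * δ) :
    μ {t | η ≤ ‖partitionAverage μ K f t‖} ≤ δ := by
  have hη₂ : 0 < η / 2 := half_pos hη
  refine (ENNReal.mul_le_mul_iff_right (ENNReal.ofReal_pos.2 hη₂).ne' ENNReal.ofReal_ne_top).1 ?_
  calc ENNReal.ofReal (η / 2) * μ {t | η ≤ ‖partitionAverage μ K f t‖}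
      ≤ ENNReal.ofReal C * μ {t | η / 2 ≤ ‖f t‖} := by
        simpa [mul_div_cancel₀] using mul_meas_ge_partitionAverage_le hK hfm hη₂.le hC
    _ ≤ ENNReal.ofReal C * (ENNReal.ofReal (η / 2 / C) * δ) := by gcongr
    _ = ENNReal.ofReal (η / 2) * δ := by
        rw [← mul_assoc, ← ENNReal.ofReal_mul hC₀.le, mul_div_cancel₀ _ hC₀.ne']

end PartitionAverage

theorem exists_partition_averaging_close_general
    {T : Type*} [MeasurableSpace T] (μ : Measure T)
    {W : Type*} [NormedAddCommGroup W] [NormedSpace ℝ W] [CompleteSpace W]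
    (X : FAdmissibleSpace μ W) (hT0 : 0 < μ Set.univ) (hTfin : μ Set.univ < ⊤)
    (Z : Set (T → W)) (hZX : Z ⊆ X.carrier) (hZcomp : X.IsCompactSet Z)
    (M : ℝ) (hMpos : 0 < M) (hbound : ∀ f ∈ Z, ∀ t, ‖f t‖ ≤ M) :
    ∀ ε : ℝ, 0 < ε →
      ∃ (k : ℕ) (K : Fin k → Set T),
        (∀ i, MeasurableSet (K i)) ∧
        Pairwise (Function.onFun Disjoint K) ∧
        (⋃ i, K i) = Set.univ ∧
        (∀ i, 0 < μ (K i)) ∧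
        ∀ f ∈ Z,
          X.Fn ((fun t => ∑ i, Set.indicator (K i)
              (fun _ => (μ (K i)).toReal⁻¹ • ∫ s in K i, f s ∂μ) t) - f) < ε := by
  intro ε hε
  have : IsFiniteMeasure μ := ⟨hTfin⟩
  have h2M : 0 < 2 * M := by positivity
  obtain ⟨η, hη, δ, hδ, hsmall⟩ :=
    X.exists_Fn_lt_of_norm_le_of_measure_le (measure_ne_top μ _) (half_pos hε) h2M
  -- the second bound absorbs the factor `2M / (η / 2)` lost when averaging over `K`
  obtain ⟨S, hS, hSM, happrox⟩ := hZcomp.exists_finite_simpleFunc_approx hZX hMpos.le hbound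
    (half_pos hη) (δ := min δ (ENNReal.ofReal (η / 2 / (2 * M)) * δ))
    (lt_min hδ (ENNReal.mul_pos (ENNReal.ofReal_pos.2 (by positivity)).ne' hδ.ne'))
  obtain ⟨k, K, hK, hconst⟩ := exists_isPosMeasurePartition_ae_const hT0.ne' hS
  refine ⟨k, K, hK.measurableSet, hK.pairwise_disjoint, hK.iUnion_eq_univ, hK.measure_pos,
    fun f hf => ?_⟩
  obtain ⟨s, hsS, hfs⟩ := happrox f hf
  have hfm := X.measurable_mem f (hZX hf)
  have hsm := s.stronglyMeasurable.aestronglyMeasurable (μ := μ)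
  have hfsM (t) : ‖(f - s) t‖ ≤ 2 * M :=
    (norm_sub_le_of_le (hbound f hf t) (hSM s hsS t)).trans_eq (two_mul M).symm
  have hPfs : X.Fn (partitionAverage μ K (f - s)) < ε / 2 :=
    hsmall _ (stronglyMeasurable_partitionAverage hK.measurableSet _).aestronglyMeasurable
      (ae_of_all _ (norm_partitionAverage_le hK (ae_of_all _ hfsM)))
      (measure_norm_partitionAverage_ge_le hK (hfm.sub hsm) h2M hη (ae_of_all _ hfsM)
        (hfs.trans (min_le_right _ _)))
  have hsf : X.Fn (s - f) < ε / 2 := by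
    refine hsmall _ (hsm.sub hfm) (ae_of_all _ fun t => norm_sub_rev (f t) (s t) ▸ hfsM t) ?_
    refine (measure_mono fun t (ht : η ≤ ‖s t - f t‖) => ?_).trans (hfs.trans (min_le_left _ _))
    simp only [Set.mem_ofPred_eq, norm_sub_rev (f t)]
    linarith
  rw [← partitionAverage_eq_sum_indicator]
  calc X.Fn (partitionAverage μ K f - f)
      ≤ X.Fn (partitionAverage μ K (f - s)) + X.Fn (s - f) :=
        X.Fn_partitionAverage_sub_le hK.measurableSet
          (.of_bound hfm M (ae_of_all _ (hbound f hf))) (.of_bound hsm M (ae_of_all _ (hSM s hsS)))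
          (partitionAverage_ae_eq_self hK (hconst s hsS))
    _ < ε := by linarith

/-- Theorem 3.3 of the paper. For a compact set `Z` of uniformly bounded
functions in an F-admissible F-space over a finite measure space, and any `ε > 0`, there is a
finite measurable partition `K` of `T` such that the averaging projection `P_K` (which sends
`f` to the simple function whose value on each `K i` is the average of `f` over `K i`)
satisfies `sup_{f ∈ Z} |P_K(f) − f|_F < ε`. -/
theorem exists_partition_averaging_close
    {T : Type*} [MeasurableSpace T] (μ : Measure T) [SigmaFinite μ]
    {W : Type*} [NormedAddCommGroup W] [NormedSpace ℝ W] [CompleteSpace W]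
    (X : FAdmissibleSpace μ W) (hT0 : 0 < μ Set.univ) (hTfin : μ Set.univ < ⊤)
    (Z : Set (T → W)) (hZX : Z ⊆ X.carrier) (hZcomp : X.IsCompactSet Z)
    (M : ℝ) (hMpos : 0 < M) (hbound : ∀ f ∈ Z, ∀ t, ‖f t‖ ≤ M) :
    ∀ ε : ℝ, 0 < ε →
      ∃ (k : ℕ) (K : Fin k → Set T),
        (∀ i, MeasurableSet (K i)) ∧
        Pairwise (Function.onFun Disjoint K) ∧
        (⋃ i, K i) = Set.univ ∧
        (∀ i, 0 < μ (K i)) ∧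
        ∀ f ∈ Z,
          X.Fn ((fun t => ∑ i, Set.indicator (K i)
              (fun _ => (μ (K i)).toReal⁻¹ • ∫ s in K i, f s ∂μ) t) - f) < ε :=
  exists_partition_averaging_close_general μ X hT0 hTfin Z hZX hZcomp M hMpos hbound
end

section
/- Let X ⊆ L₀(T) be an F-admissible F-space and for a > 0 define T_a : X → X by (T_a f)(t) = R_a(f(t)), where R_a is the radial projection of W onto its closed ball of radius a. Then |T_a f − T_a g|_F ≤ 2|f − g|_F for all f, g ∈ X, and for every ε > 0 and every compact subset Z ⊆ X there exists a > 0 such that sup{|f − T_a f|_F : f ∈ Z} < ε. -/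
open MeasureTheory Filter Topology

/-- The radial projection of the Banach space `W` onto its closed ball of radius `a`. -/
noncomputable def radialProj {W : Type*} [NormedAddCommGroup W] [NormedSpace ℝ W]
    (a : ℝ) (w : W) : W :=
  if ‖w‖ ≤ a then w else (a / ‖w‖) • w


section Aux

variable {W : Type*} [NormedAddCommGroup W] [NormedSpace ℝ W]

lemma norm_radialProj_le {a : ℝ} (ha : 0 ≤ a) (w : W) : ‖radialProj a w‖ ≤ ‖w‖ := by
  unfold radialProj
  split_ifs with h
  · exact le_refl _
  · push_neg at h
    have hw0 : (0:ℝ) < ‖w‖ := lt_of_le_of_lt ha h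
    rw [norm_smul, Real.norm_eq_abs, abs_of_nonneg (div_nonneg ha hw0.le)]
    exact mul_le_of_le_one_left (norm_nonneg w) ((div_le_one hw0).2 h.le)

lemma radialProj_lip {a : ℝ} (ha : 0 ≤ a) (w v : W) :
    ‖radialProj a w - radialProj a v‖ ≤ 2 * ‖w - v‖ := by
  wlog hwv : ‖v‖ ≤ ‖w‖ with H
  · push_neg at hwv
    rw [norm_sub_rev, norm_sub_rev w v]
    exact H ha v w hwv.le
  by_cases h1 : ‖w‖ ≤ a
  · have h2 : ‖v‖ ≤ a := hwv.trans h1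
    simp only [radialProj, if_pos h1, if_pos h2]
    linarith [norm_nonneg (w - v)]
  · push_neg at h1
    have hw0 : (0:ℝ) < ‖w‖ := lt_of_le_of_lt ha h1
    by_cases h2 : ‖v‖ ≤ a
    · simp only [radialProj, if_neg (not_le.2 h1), if_pos h2]
      have key : (a/‖w‖)•w - v = (a/‖w‖)•(w-v) + (a/‖w‖ - 1)•v := by
        rw [smul_sub, sub_smul, one_smul]; abel
      rw [key]
      have hr1 : a/‖w‖ ≤ 1 := (div_le_one hw0).2 h1.le
      have hr0 : (0:ℝ) ≤ a/‖w‖ := div_nonneg ha hw0.le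
      calc ‖(a/‖w‖)•(w-v) + (a/‖w‖ - 1)•v‖
          ≤ ‖(a/‖w‖)•(w-v)‖ + ‖(a/‖w‖ - 1)•v‖ := norm_add_le _ _
        _ = (a/‖w‖) * ‖w-v‖ + (1 - a/‖w‖) * ‖v‖ := by
            rw [norm_smul, norm_smul, Real.norm_eq_abs, Real.norm_eq_abs,
              abs_of_nonneg hr0, abs_of_nonpos (by linarith)]; ring
        _ ≤ 2 * ‖w - v‖ := by
            have e1 : (1 - a/‖w‖) * ‖v‖ ≤ (1 - a/‖w‖) * ‖w‖ :=
              mul_le_mul_of_nonneg_left hwv (by linarith)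
            have e2 : a/‖w‖ * ‖w-v‖ ≤ ‖w-v‖ :=
              mul_le_of_le_one_left (norm_nonneg _) hr1
            have e3 : (1 - a/‖w‖) * ‖w‖ = ‖w‖ - a := by
              rw [sub_mul, one_mul, div_mul_cancel₀ a hw0.ne']
            have e4 : ‖w‖ - ‖v‖ ≤ ‖w - v‖ := norm_sub_norm_le w v
            linarith
    · push_neg at h2
      have hv0 : (0:ℝ) < ‖v‖ := lt_of_le_of_lt ha h2
      simp only [radialProj, if_neg (not_le.2 h1), if_neg (not_le.2 h2)]
      have key : (a/‖w‖)•w - (a/‖v‖)•v = (a/‖w‖)•(w-v) + (a/‖w‖ - a/‖v‖)•v := by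
        rw [smul_sub, sub_smul]; abel
      rw [key]
      have hr0 : (0:ℝ) ≤ a/‖w‖ := div_nonneg ha hw0.le
      have hr1 : a/‖w‖ ≤ 1 := (div_le_one hw0).2 h1.le
      have hle : a/‖w‖ ≤ a/‖v‖ := by gcongr
      calc ‖(a/‖w‖)•(w-v) + (a/‖w‖ - a/‖v‖)•v‖
          ≤ ‖(a/‖w‖)•(w-v)‖ + ‖(a/‖w‖ - a/‖v‖)•v‖ := norm_add_le _ _
        _ = (a/‖w‖) * ‖w-v‖ + (a/‖v‖ - a/‖w‖) * ‖v‖ := by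
            rw [norm_smul, norm_smul, Real.norm_eq_abs, Real.norm_eq_abs,
              abs_of_nonneg hr0, abs_of_nonpos (by linarith)]; ring
        _ ≤ 2 * ‖w - v‖ := by
            have e0 : (a/‖v‖ - a/‖w‖) * ‖v‖ = (a/‖w‖) * (‖w‖ - ‖v‖) := by
              field_simp
            have e4 : ‖w‖ - ‖v‖ ≤ ‖w - v‖ := norm_sub_norm_le w v
            have e5 : (a/‖w‖) * (‖w‖ - ‖v‖) ≤ 1 * ‖w - v‖ :=
              mul_le_mul hr1 e4 (by linarith) zero_le_one
            have e2 : a/‖w‖ * ‖w-v‖ ≤ ‖w-v‖ :=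
              mul_le_of_le_one_left (norm_nonneg _) hr1
            linarith

lemma radialProj_aesm {T : Type*} [MeasurableSpace T] {μ : Measure T}
    {f : T → W} (hf : AEStronglyMeasurable f μ) (a : ℝ) :
    AEStronglyMeasurable (fun t => radialProj a (f t)) μ := by
  obtain ⟨g, hg, hfg⟩ := hf
  refine ⟨fun t => radialProj a (g t), ?_, hfg.mono fun t ht => by
    show radialProj a (f t) = radialProj a (g t); rw [ht]⟩
  unfold radialProj
  have hn : Measurable fun t => ‖g t‖ := hg.norm.measurable
  exact StronglyMeasurable.ite (measurableSet_le hn measurable_const)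
    hg (((measurable_const.div hn).stronglyMeasurable).smul hg)

variable {T : Type*} [MeasurableSpace T] {μ : Measure T}

lemma FAdmissibleSpace.sub_mem_s9 (X : FAdmissibleSpace μ W) {f g : T → W}
    (hf : f ∈ X.carrier) (hg : g ∈ X.carrier) : f - g ∈ X.carrier := by
  have := X.add_mem f ((-1:ℝ) • g) hf (X.smul_mem _ _ hg)
  simpa [neg_one_smul, sub_eq_add_neg] using this

lemma FAdmissibleSpace.lipFn (X : FAdmissibleSpace μ W) {a : ℝ} (ha : 0 ≤ a)
    {f g : T → W} (hf : f ∈ X.carrier) (hg : g ∈ X.carrier) :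
    X.Fn ((fun t => radialProj a (f t)) - fun t => radialProj a (g t))
      ≤ 2 * X.Fn (f - g) := by
  have hfm := X.measurable_mem f hf
  have hgm := X.measurable_mem g hg
  have h2 : (2:ℝ) • (f - g) ∈ X.carrier := X.smul_mem _ _ (X.sub_mem_s9 hf hg)
  have hmeas : AEStronglyMeasurable
      ((fun t => radialProj a (f t)) - fun t => radialProj a (g t)) μ :=
    (radialProj_aesm hfm a).sub (radialProj_aesm hgm a)
  have hdom : ∀ᵐ t ∂μ, ‖((fun t => radialProj a (f t)) - fun t => radialProj a (g t)) t‖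
      ≤ ‖((2:ℝ) • (f - g)) t‖ := by
    refine Eventually.of_forall fun t => ?_
    have := radialProj_lip ha (f t) (g t)
    simp only [Pi.sub_apply, Pi.smul_apply, norm_smul, Real.norm_ofNat]
    simpa using this
  have hle := (X.mono _ _ hmeas h2 hdom).2
  have e : (2:ℝ) • (f - g) = (f - g) + (f - g) := two_smul ℝ _
  have := X.Fn_add (f - g) (f - g)
  rw [e] at hle
  linarith

lemma FAdmissibleSpace.approx (X : FAdmissibleSpace μ W) {f : T → W}
    (hf : f ∈ X.carrier) (a : ℕ → ℝ) (ha0 : ∀ n, 0 ≤ a n)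
    (ha : Tendsto a atTop atTop) :
    Tendsto (fun n => X.Fn (f - fun t => radialProj (a n) (f t))) atTop (𝓝 0) := by
  have hfm := X.measurable_mem f hf
  have hmem : ∀ n, (fun t => radialProj (a n) (f t)) ∈ X.carrier := fun n =>
    (X.mono _ f (radialProj_aesm hfm _) hf
      (Eventually.of_forall fun t => norm_radialProj_le (ha0 n) _)).1
  have hconv : ∀ᵐ t ∂μ,
      Tendsto (fun n => radialProj (a n) (f t)) atTop (𝓝 (f t)) := by
    refine Eventually.of_forall fun t => ?_
    refine Tendsto.congr' ?_ tendsto_const_nhds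
    filter_upwards [ha.eventually_ge_atTop ‖f t‖] with n hn
    simp [radialProj, hn]
  have hd := X.dominated f _ hf hmem hconv (fun n t => norm_radialProj_le (ha0 n) _)
  refine hd.congr fun n => ?_
  have e : f - (fun t => radialProj (a n) (f t))
      = -((fun t => radialProj (a n) (f t)) - f) := (neg_sub _ _).symm
  rw [e, X.Fn_neg]

end Aux

/-- Lemma 4.3 of the paper. The truncation operators
`(T_a f)(t) = R_a(f(t))` satisfy `|T_a f − T_a g|_F ≤ 2 |f − g|_F`, and approximate the
identity uniformly on compact subsets of an F-admissible F-space. -/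
theorem radial_truncation_lipschitz_and_approx
    {T : Type*} [MeasurableSpace T] (μ : Measure T) [SigmaFinite μ]
    {W : Type*} [NormedAddCommGroup W] [NormedSpace ℝ W]
    (X : FAdmissibleSpace μ W) :
    (∀ a : ℝ, 0 < a → ∀ f ∈ X.carrier, ∀ g ∈ X.carrier,
        X.Fn ((fun t => radialProj a (f t)) - fun t => radialProj a (g t))
          ≤ 2 * X.Fn (f - g)) ∧
    (∀ ε : ℝ, 0 < ε → ∀ Z : Set (T → W), Z ⊆ X.carrier → X.IsCompactSet Z →
      ∃ a : ℝ, 0 < a ∧ ∀ f ∈ Z,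
        X.Fn (f - fun t => radialProj a (f t)) < ε) := by
  constructor
  · intro a ha f hf g hg
    exact X.lipFn ha.le hf hg
  · intro ε hε Z hZX hZ
    by_contra hcon
    push_neg at hcon
    have H : ∀ n : ℕ, ∃ f ∈ Z, ε ≤ X.Fn (f - fun t => radialProj ((n:ℝ)+1) (f t)) :=
      fun n => hcon ((n:ℝ)+1) (by positivity)
    choose g hgZ hge using H
    obtain ⟨f, hfZ, φ, hφ, hconv⟩ := hZ g hgZ
    have hfX := hZX hfZ
    have hb0 : ∀ k : ℕ, (0:ℝ) ≤ (φ k : ℝ) + 1 := fun k => by positivity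
    have hbt : Tendsto (fun k : ℕ => (φ k : ℝ) + 1) atTop atTop :=
      tendsto_atTop_add_const_right _ 1
        (tendsto_natCast_atTop_atTop.comp hφ.tendsto_atTop)
    have happrox := X.approx hfX (fun k : ℕ => (φ k : ℝ) + 1) hb0 hbt
    have tri : ∀ A B C : T → W, X.Fn (A - C) ≤ X.Fn (A - B) + X.Fn (B - C) := by
      intro A B C
      have h := X.Fn_add (A - B) (B - C)
      rwa [sub_add_sub_cancel] at h
    have hsym : ∀ A B : T → W, X.Fn (A - B) = X.Fn (B - A) := fun A B => by
      rw [← X.Fn_neg (B - A), neg_sub]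
    have key : ∀ k, ε ≤ 3 * X.Fn (g (φ k) - f)
        + X.Fn (f - fun t => radialProj ((φ k : ℝ) + 1) (f t)) := by
      intro k
      have h1 := hge (φ k)
      have t1 := tri (g (φ k)) f (fun t => radialProj ((φ k : ℝ) + 1) (g (φ k) t))
      have t2 := tri f (fun t => radialProj ((φ k : ℝ) + 1) (f t))
        (fun t => radialProj ((φ k : ℝ) + 1) (g (φ k) t))
      have t3 : X.Fn ((fun t => radialProj ((φ k : ℝ) + 1) (f t))
            - fun t => radialProj ((φ k : ℝ) + 1) (g (φ k) t))
          ≤ 2 * X.Fn (f - g (φ k)) := X.lipFn (hb0 k) hfX (hZX (hgZ (φ k)))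
      have t4 : X.Fn (f - g (φ k)) = X.Fn (g (φ k) - f) := hsym f _
      linarith
    have hlim : Tendsto (fun k => 3 * X.Fn (g (φ k) - f)
        + X.Fn (f - fun t => radialProj ((φ k : ℝ) + 1) (f t))) atTop (𝓝 0) := by
      have := (hconv.const_mul 3).add happrox
      simpa using this
    obtain ⟨k, hk⟩ := (hlim.eventually (gt_mem_nhds hε)).exists
    linarith [key k]
end
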